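/- Let (V, W, S, T, Q, P) be a Harnad datum with V ≠ 0, assume T is nilpotent (D = {0}), and assume the datum (V,W,T,Q,P) is stable. Suppose moreover W is decomposed as W = ⊕_k W_k with injections ι : W_k ↪ W_{k-1} realizing T in normal form, with block components Q_k : W_k → V and P_k : V → W_k of Q, P. Then: the Harnad datum is irreducible if and only if the only subspaces X ⊆ V with S(X) ⊆ X and (Σ_{j≥1} Q_j P_{j+k-1})(X) ⊆ X for all k ≥ 1 are X = 0 and X = V. -/

import Mathlib

/-!
A subrepresentation `(X, Y)` makes `X` invariant under every `A_{n+1} = Q Tⁿ P`, since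
`P(X) ⊆ Y`, `T(Y) ⊆ Y` and `Q(Y) ⊆ X`; stability then makes `Y` trivial together with `X`.
Conversely, a subspace `X` invariant under `S` and all `Q Tⁿ P` is the first component of the
subrepresentation `(X, ⋂ₙ (Q Tⁿ)⁻¹(X))`. In normal form `Q Tⁿ P = Σ_j Q_j P_{j+n}`, because `Tⁿ`
shifts the blocks by `n` through the iterated inclusions.
-/

section Setup

variable (V : Type*) [AddCommGroup V] [Module ℂ V]
variable (m : ℕ) (Wf : ℕ → Type*) [∀ n, AddCommGroup (Wf n)] [∀ n, Module ℂ (Wf n)]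

/-- The nilpotent endomorphism in normal form on `W = ⊕_{i≤m} W_i`:
`T(w₀, w₁, …) = (ι w₁, ι w₂, …, 0)`, where `ι : W_{i+1} ↪ W_i`. -/
noncomputable def Tbig (ι : ∀ n, Wf (n + 1) →ₗ[ℂ] Wf n) :
    (∀ i : Fin (m + 1), Wf i) →ₗ[ℂ] (∀ i : Fin (m + 1), Wf i) :=
  LinearMap.pi fun i =>
    if h : (i : ℕ) + 1 < m + 1 then
      (ι i).comp (LinearMap.proj (⟨(i : ℕ) + 1, h⟩ : Fin (m + 1)))
    else 0

/-- `Q : W → V` with block components `Q_i`. -/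
noncomputable def Qbig (Qc : ∀ i : Fin (m + 1), Wf i →ₗ[ℂ] V) :
    (∀ i : Fin (m + 1), Wf i) →ₗ[ℂ] V :=
  ∑ i : Fin (m + 1), (Qc i) ∘ₗ LinearMap.proj i

/-- `P : V → W` with block components `P_i`. -/
noncomputable def Pbig (Pc : ∀ i : Fin (m + 1), V →ₗ[ℂ] Wf i) :
    V →ₗ[ℂ] (∀ i : Fin (m + 1), Wf i) :=
  LinearMap.pi Pc

/-- The iterated inclusion `W_{j+a} ↪ W_j` obtained by composing the `ι`'s. -/
noncomputable def iotaChain (ι : ∀ n, Wf (n + 1) →ₗ[ℂ] Wf n) (j : ℕ) :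
    ∀ a : ℕ, Wf (j + a) →ₗ[ℂ] Wf j
  | 0 => LinearMap.id
  | (a + 1) => (iotaChain ι j a) ∘ₗ (ι (j + a))

/-- The Laurent coefficient `A_{a+1} = Σ_j Q_j P_{j+a}` (0-indexed) of the system
`A(z) = S + Q(z − T)^{-1} P`, where `W_{j+a}` is regarded inside `W_j` via `ι`. -/
noncomputable def Acoef (ι : ∀ n, Wf (n + 1) →ₗ[ℂ] Wf n)
    (Qc : ∀ i : Fin (m + 1), Wf i →ₗ[ℂ] V)
    (Pc : ∀ i : Fin (m + 1), V →ₗ[ℂ] Wf i) (a : ℕ) : Module.End ℂ V :=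
  ∑ j : Fin (m + 1),
    if h : (j : ℕ) + a < m + 1 then
      (Qc j) ∘ₗ (iotaChain Wf ι j a) ∘ₗ (Pc ⟨(j : ℕ) + a, h⟩)
    else 0

end Setup

namespace Submodule

variable {R V W : Type*} [Semiring R] [AddCommMonoid V] [Module R V] [AddCommMonoid W]
  [Module R W]

theorem map_pow_le_of_map_le {Y : Submodule R W} {T : Module.End R W} (hT : Y.map T ≤ Y) (n : ℕ) :
    Y.map (T ^ n) ≤ Y := by
  rw [map_le_iff_le_comap] at hT ⊢
  intro w hw
  rw [mem_comap, Module.End.coe_pow]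
  exact Set.MapsTo.iterate hT n hw

theorem map_comp_pow_comp_le {X : Submodule R V} {Y : Submodule R W} {T : Module.End R W}
    {Q : W →ₗ[R] V} {P : V →ₗ[R] W} (hP : X.map P ≤ Y) (hT : Y.map T ≤ Y) (hQ : Y.map Q ≤ X)
    (n : ℕ) : X.map (Q ∘ₗ (T ^ n) ∘ₗ P) ≤ X := by
  rw [map_comp, map_comp]
  exact (map_mono ((map_mono hP).trans (map_pow_le_of_map_le hT n))).trans hQ

theorem map_iInf_comap_comp_pow_le (X : Submodule R V) (T : Module.End R W) (Q : W →ₗ[R] V) :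
    (⨅ n : ℕ, X.comap (Q ∘ₗ (T ^ n))).map T ≤ ⨅ n : ℕ, X.comap (Q ∘ₗ (T ^ n)) := by
  rw [map_le_iff_le_comap, comap_iInf]
  refine le_iInf fun n => (iInf_le _ (n + 1)).trans_eq ?_
  rw [← comap_comp, LinearMap.comp_assoc, ← Module.End.mul_eq_comp, pow_succ]

end Submodule

section HarnadDatum

variable {R V W : Type*} [Semiring R] [AddCommMonoid V] [Module R V] [AddCommMonoid W]
  [Module R W]

theorem harnad_irreducible_iff_of_stable (S : Module.End R V) (T : Module.End R W)
    (Q : W →ₗ[R] V) (P : V →ₗ[R] W)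
    (hstab : ∀ (X : Submodule R V) (Y : Submodule R W), X.map P ≤ Y → Y.map Q ≤ X →
      Y.map T ≤ Y → (X = ⊥ → Y = ⊥) ∧ (X = ⊤ → Y = ⊤)) :
    (∀ (X : Submodule R V) (Y : Submodule R W), X.map S ≤ X → Y.map T ≤ Y → Y.map Q ≤ X →
        X.map P ≤ Y → (X = ⊥ ∧ Y = ⊥) ∨ (X = ⊤ ∧ Y = ⊤)) ↔
    (∀ X : Submodule R V, X.map S ≤ X → (∀ n : ℕ, X.map (Q ∘ₗ (T ^ n) ∘ₗ P) ≤ X) →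
        X = ⊥ ∨ X = ⊤) := by
  constructor
  · intro hirr X hS hA
    -- the largest `T`-invariant submodule of `Q⁻¹(X)`; it contains `P(X)` exactly because of `hA`
    set Y := ⨅ n : ℕ, X.comap (Q ∘ₗ (T ^ n))
    have hP : X.map P ≤ Y := by
      rw [Submodule.map_le_iff_le_comap, Submodule.comap_iInf]
      refine le_iInf fun n => ?_
      rw [← Submodule.comap_comp, ← Submodule.map_le_iff_le_comap]
      exact hA n
    have hQ : Y.map Q ≤ X := by
      rw [Submodule.map_le_iff_le_comap]
      exact (iInf_le _ 0).trans_eq (by rw [pow_zero, Module.End.one_eq_id, LinearMap.comp_id])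
    exact (hirr X Y hS (Submodule.map_iInf_comap_comp_pow_le X T Q) hQ hP).imp And.left And.left
  · intro hpair X Y hS hT hQ hP
    have hstabXY := hstab X Y hP hQ hT
    exact (hpair X hS (Submodule.map_comp_pow_comp_le hP hT hQ)).imp
      (fun hX => ⟨hX, hstabXY.1 hX⟩) (fun hX => ⟨hX, hstabXY.2 hX⟩)

end HarnadDatum

section NormalForm

variable (V : Type*) [AddCommGroup V] [Module ℂ V]
variable (m : ℕ) (Wf : ℕ → Type*) [∀ n, AddCommGroup (Wf n)] [∀ n, Module ℂ (Wf n)]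
variable (ι : ∀ n, Wf (n + 1) →ₗ[ℂ] Wf n)

theorem Tbig_apply (w : ∀ i : Fin (m + 1), Wf i) (i : Fin (m + 1)) :
    Tbig m Wf ι w i =
      if h : (i : ℕ) + 1 < m + 1 then ι i (w ⟨(i : ℕ) + 1, h⟩) else 0 := by
  simp only [Tbig, LinearMap.pi_apply]
  split_ifs <;> rfl

theorem Tbig_pow_apply (a : ℕ) (w : ∀ i : Fin (m + 1), Wf i) (i : Fin (m + 1)) :
    (Tbig m Wf ι ^ a) w i =
      if h : (i : ℕ) + a < m + 1 then iotaChain Wf ι i a (w ⟨(i : ℕ) + a, h⟩) else 0 := by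
  induction a generalizing w with
  | zero => rw [pow_zero, dif_pos (by simpa using i.isLt)]; rfl
  | succ a ih =>
    rw [pow_succ, Module.End.mul_apply, ih]
    by_cases h : (i : ℕ) + a < m + 1
    · rw [dif_pos h, Tbig_apply]
      by_cases h' : (i : ℕ) + (a + 1) < m + 1
      · rw [dif_pos (by simpa [add_assoc] using h'), dif_pos h']
        rfl
      · rw [dif_neg (by simpa [add_assoc] using h'), dif_neg h', map_zero]
    · rw [dif_neg h, dif_neg (by omega)]

theorem Acoef_eq_comp_pow_comp (Qc : ∀ i : Fin (m + 1), Wf i →ₗ[ℂ] V)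
    (Pc : ∀ i : Fin (m + 1), V →ₗ[ℂ] Wf i) (a : ℕ) :
    Acoef V m Wf ι Qc Pc a = Qbig V m Wf Qc ∘ₗ (Tbig m Wf ι ^ a) ∘ₗ Pbig V m Wf Pc := by
  ext v
  simp only [Acoef, Qbig, LinearMap.sum_apply, LinearMap.comp_apply, LinearMap.proj_apply,
    Tbig_pow_apply]
  refine Finset.sum_congr rfl fun j _ => ?_
  split_ifs <;> simp [Pbig]

end NormalForm

theorem stmt11_general
    (V : Type*) [AddCommGroup V] [Module ℂ V]
    (m : ℕ) (Wf : ℕ → Type*) [∀ n, AddCommGroup (Wf n)] [∀ n, Module ℂ (Wf n)]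
    (ι : ∀ n, Wf (n + 1) →ₗ[ℂ] Wf n)
    (S : Module.End ℂ V)
    (Qc : ∀ i : Fin (m + 1), Wf i →ₗ[ℂ] V) (Pc : ∀ i : Fin (m + 1), V →ₗ[ℂ] Wf i)
    (hstab : ∀ (X : Submodule ℂ V) (Y : Submodule ℂ (∀ i : Fin (m + 1), Wf i)),
      X.map (Pbig V m Wf Pc) ≤ Y → Y.map (Qbig V m Wf Qc) ≤ X →
      Y.map (Tbig m Wf ι) ≤ Y →
      (X = ⊥ → Y = ⊥) ∧ (X = ⊤ → Y = ⊤)) :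
    (∀ (X : Submodule ℂ V) (Y : Submodule ℂ (∀ i : Fin (m + 1), Wf i)),
        X.map S ≤ X → Y.map (Tbig m Wf ι) ≤ Y → Y.map (Qbig V m Wf Qc) ≤ X →
        X.map (Pbig V m Wf Pc) ≤ Y →
        (X = ⊥ ∧ Y = ⊥) ∨ (X = ⊤ ∧ Y = ⊤)) ↔
    (∀ X : Submodule ℂ V, X.map S ≤ X →
        (∀ a : ℕ, X.map (Acoef V m Wf ι Qc Pc a) ≤ X) → X = ⊥ ∨ X = ⊤) := by
  simpa only [Acoef_eq_comp_pow_comp] using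
    harnad_irreducible_iff_of_stable S (Tbig m Wf ι) (Qbig V m Wf Qc) (Pbig V m Wf Pc) hstab

/-- for a Harnad datum `(V,W,S,T,Q,P)` with `V ≠ 0`, `T` nilpotent in
normal form w.r.t. a decomposition `W = ⊕ W_i` with injections `ι : W_{i+1} ↪ W_i`,
and `(V,W,T,Q,P)` stable: the Harnad datum is irreducible if and only if the only
subspaces `X ⊆ V` invariant under `S` and under every Laurent coefficient
`A_k = Σ_{j≥1} Q_j P_{j+k-1}` (`k ≥ 1`) are `0` and `V`. -/
theorem stmt11
    (V : Type*) [AddCommGroup V] [Module ℂ V] [FiniteDimensional ℂ V] [Nontrivial V]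
    (m : ℕ) (Wf : ℕ → Type*) [∀ n, AddCommGroup (Wf n)] [∀ n, Module ℂ (Wf n)]
    [∀ n, FiniteDimensional ℂ (Wf n)]
    (ι : ∀ n, Wf (n + 1) →ₗ[ℂ] Wf n) (hι : ∀ n, Function.Injective (ι n))
    (S : Module.End ℂ V)
    (Qc : ∀ i : Fin (m + 1), Wf i →ₗ[ℂ] V) (Pc : ∀ i : Fin (m + 1), V →ₗ[ℂ] Wf i)
    (hstab : ∀ (X : Submodule ℂ V) (Y : Submodule ℂ (∀ i : Fin (m + 1), Wf i)),
      X.map (Pbig V m Wf Pc) ≤ Y → Y.map (Qbig V m Wf Qc) ≤ X →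
      Y.map (Tbig m Wf ι) ≤ Y →
      (X = ⊥ → Y = ⊥) ∧ (X = ⊤ → Y = ⊤)) :
    (∀ (X : Submodule ℂ V) (Y : Submodule ℂ (∀ i : Fin (m + 1), Wf i)),
        X.map S ≤ X → Y.map (Tbig m Wf ι) ≤ Y → Y.map (Qbig V m Wf Qc) ≤ X →
        X.map (Pbig V m Wf Pc) ≤ Y →
        (X = ⊥ ∧ Y = ⊥) ∨ (X = ⊤ ∧ Y = ⊤)) ↔
    (∀ X : Submodule ℂ V, X.map S ≤ X →
        (∀ a : ℕ, X.map (Acoef V m Wf ι Qc Pc a) ≤ X) → X = ⊥ ∨ X = ⊤) :=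
  stmt11_general V m Wf ι S Qc Pc hstab
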